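/- arXiv:1404.2317 — 3 statements merged into one kernel-verified Lean document; each statement's English description precedes it below -/
import Mathlib

section
/- Let Ω₀ = [0,1) ∪ ⋃_{n≥2} [n − 2^{−(n−2)}, n − 2^{−(n−1)}) ⊆ ℝ. Then Ω₀ 2-tiles ℝ with respect to the lattice ℤ, i.e., for almost every x ∈ ℝ, the number of integers m with x − m ∈ Ω₀ equals 2. -/
open MeasureTheory

/-- The set `Ω₀ = [0,1) ∪ ⋃_{n≥2} [n − 2^{−(n−2)}, n − 2^{−(n−1)})`
(here parametrized by `n = m + 2`, `m ∈ ℕ`). -/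
noncomputable def Omega0 : Set ℝ :=
  Set.Ico (0 : ℝ) 1 ∪
    ⋃ m : ℕ, Set.Ico ((m + 2 : ℝ) - 2 ^ (-(m : ℤ))) ((m + 2 : ℝ) - 2 ^ (-(m : ℤ) - 1))

/-!
Since `n + 2 - 2^{-n} = (n + 1) + (1 - 2^{-n})`, the `n`-th interval of `Ω₀` is the dyadic piece
`[1 - 2^{-n}, 1 - 2^{-(n+1)})` of `[0, 1)` translated by the integer `n + 1`. These pieces partition
`[0, 1)`, so their translates meet every coset `x + ℤ` exactly once, and so does `[0, 1)` itself;
the two hits are distinct because the translates lie in `[1, ∞)`.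
-/

open Set Function

theorem setOf_sub_mem_Ico_zero_one (x : ℝ) : {m : ℤ | x - m ∈ Ico (0 : ℝ) 1} = {⌊x⌋} := by
  ext m
  rw [mem_ofPred_eq, mem_singleton_iff, eq_comm, Int.floor_eq_iff, mem_Ico]
  constructor <;> rintro ⟨h₀, h₁⟩ <;> constructor <;> linarith

theorem setOf_exists_sub_sub_mem_eq_singleton {ι : Type*} {I : ι → Set ℝ}
    (hI : ∀ i, I i ⊆ Ico 0 1) (hdisj : Pairwise (Disjoint on I)) (c : ι → ℤ) {x : ℝ} {j : ι}
    (hj : Int.fract x ∈ I j) :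
    {m : ℤ | ∃ i, x - m - c i ∈ I i} = {⌊x⌋ - c j} := by
  ext m
  simp only [mem_ofPred_eq, mem_singleton_iff]
  constructor
  · rintro ⟨i, hi⟩
    have hfloor : ⌊x⌋ = m + c i := by
      obtain ⟨h₀, h₁⟩ := hI i hi
      rw [Int.floor_eq_iff]
      push_cast
      constructor <;> linarith
    have hfract : x - m - c i = Int.fract x := by
      rw [Int.fract, hfloor]
      push_cast
      ring
    obtain rfl : i = j := hdisj.eq (not_disjoint_iff.2 ⟨_, hfract ▸ hi, hj⟩)
    omega
  · rintro rfl
    refine ⟨j, ?_⟩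
    rwa [Int.cast_sub, sub_sub, sub_add_cancel]

noncomputable def dyadicPoint (n : ℕ) : ℝ := 1 - 2 ^ (-(n : ℤ))

theorem dyadicPoint_eq_one_sub_pow (n : ℕ) : dyadicPoint n = 1 - (1 / 2) ^ n := by
  rw [dyadicPoint, zpow_neg, zpow_natCast, one_div, inv_pow]

theorem dyadicPoint_succ (n : ℕ) : dyadicPoint (n + 1) = 1 - 2 ^ (-(n : ℤ) - 1) := by
  rw [dyadicPoint]
  push_cast
  ring_nf

theorem monotone_dyadicPoint : Monotone dyadicPoint := by
  intro m n h
  simp only [dyadicPoint_eq_one_sub_pow]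
  exact sub_le_sub_left (pow_le_pow_of_le_one (by norm_num) (by norm_num) h) 1

theorem Ico_dyadicPoint_subset_Ico_zero_one (n : ℕ) :
    Ico (dyadicPoint n) (dyadicPoint (n + 1)) ⊆ Ico 0 1 := by
  refine Ico_subset_Ico ?_ ?_ <;> rw [dyadicPoint_eq_one_sub_pow]
  · exact sub_nonneg.2 (pow_le_one₀ (by norm_num) (by norm_num))
  · exact sub_le_self 1 (by positivity)

theorem pairwise_disjoint_Ico_dyadicPoint :
    Pairwise (Disjoint on fun n => Ico (dyadicPoint n) (dyadicPoint (n + 1))) := by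
  simpa using monotone_dyadicPoint.pairwise_disjoint_on_Ico_succ

theorem exists_mem_Ico_dyadicPoint {t : ℝ} (ht : t ∈ Ico (0 : ℝ) 1) :
    ∃ n, t ∈ Ico (dyadicPoint n) (dyadicPoint (n + 1)) := by
  obtain ⟨n, hlt, hle⟩ := exists_nat_pow_near_of_lt_one (x := 1 - t) (y := 1 / 2)
    (by linarith [ht.2]) (by linarith [ht.1]) (by norm_num) (by norm_num)
  refine ⟨n, ?_⟩
  rw [mem_Ico, dyadicPoint_eq_one_sub_pow, dyadicPoint_eq_one_sub_pow]
  constructor <;> linarith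

theorem sub_mem_Omega0_iff (x : ℝ) (m : ℤ) :
    x - m ∈ Omega0 ↔ x - m ∈ Ico (0 : ℝ) 1 ∨
      ∃ n : ℕ, x - m - ((n + 1 : ℤ) : ℝ) ∈ Ico (dyadicPoint n) (dyadicPoint (n + 1)) := by
  simp only [Omega0, mem_union, mem_iUnion, mem_Ico, dyadicPoint_succ]
  simp only [dyadicPoint]
  push_cast
  refine or_congr_right (exists_congr fun n => and_congr ?_ ?_) <;>
    constructor <;> intro h <;> linarith

/-- `Ω₀` 2-tiles `ℝ` with respect to the lattice `ℤ`. -/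
theorem Omega0_two_tiles :
    ∀ᵐ x ∂(volume : Measure ℝ), {m : ℤ | x - (m : ℝ) ∈ Omega0}.ncard = 2 := by
  refine Filter.Eventually.of_forall fun x => ?_
  obtain ⟨n, hn⟩ := exists_mem_Ico_dyadicPoint ⟨Int.fract_nonneg x, Int.fract_lt_one x⟩
  simp only [sub_mem_Omega0_iff, ofPred_or]
  rw [setOf_sub_mem_Ico_zero_one,
    setOf_exists_sub_sub_mem_eq_singleton Ico_dyadicPoint_subset_Ico_zero_one
      pairwise_disjoint_Ico_dyadicPoint (fun n => (n + 1 : ℤ)) hn,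
    singleton_union, ncard_pair (by omega)]
end

section
/- Let Λ be a full-rank lattice in ℝ^d and Ω ⊆ ℝ^d a bounded measurable set that k-tiles ℝ^d by Λ. Then for Lebesgue-almost every k-tuple (a₁,…,a_k) ∈ (ℝ^d)^k the following holds: for almost every ω in a fundamental domain D of ℝ^d/Λ, with λ₁(ω),…,λ_k(ω) the k elements of Λ such that ω + λ_j(ω) ∈ Ω, the k×k matrix E with entries E_{j,l} = e^{2πi⟨a_l, λ_j(ω)⟩} is invertible. -/
/-!
Since `Λ` is discrete it is countable, so only countably many tuples `λ ∈ Λᵏ` occur and it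
suffices to treat one injective `λ` at a time. By the Leibniz formula the determinant is the
exponential sum `a ↦ ∑_σ sign σ · e^{2πi ⟨a, λ ∘ σ⟩}`, whose frequencies `λ ∘ σ` are pairwise
distinct. Along the lines `t ↦ b + t • u` in a direction `u` separating these frequencies, it
restricts to a nontrivial exponential sum in `t`: by linear independence of characters this is a
nonzero real-analytic function, so it vanishes only on a discrete set. Fubini over this family of
lines shows that the zero set of the determinant is null.
-/

open MeasureTheory Complex Function Real Filter Set
open scoped ENNReal

lemma linearIndependent_cexp_mul {ι : Type*} {x : ι → ℂ} (hx : Injective x) :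
    LinearIndependent ℂ fun s (t : ℝ) => cexp (x s * t) := by
  let χ : ι → Multiplicative ℝ →* ℂ := fun s =>
    { toFun t := cexp (x s * t.toAdd)
      map_one' := by simp
      map_mul' t t' := by simp [mul_add, Complex.exp_add] }
  have hderiv (y : ℂ) : HasDerivAt (fun t : ℝ => cexp (y * t)) y 0 := by
    simpa using ((hasDerivAt_id (0 : ℝ)).ofReal_comp.const_mul y).cexp
  have hχ : Injective χ := fun s s' h => by
    have hfun : (fun t : ℝ => cexp (x s * t)) = fun t : ℝ => cexp (x s' * t) :=
      funext fun t => DFunLike.congr_fun h (Multiplicative.ofAdd t)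
    exact hx <| (hderiv (x s)).unique (hfun ▸ hderiv (x s'))
  exact (linearIndependent_monoidHom (Multiplicative ℝ) ℂ).comp χ hχ

lemma ae_sum_mul_cexp_ne_zero {ι : Type*} [Fintype ι] {c : ι → ℂ} (hc : c ≠ 0) {x : ι → ℂ}
    (hx : Injective x) : ∀ᵐ t : ℝ, ∑ s, c s * cexp (x s * t) ≠ 0 := by
  set g : ℝ → ℂ := fun t => ∑ s, c s * cexp (x s * t)
  have hg : AnalyticOnNhd ℝ g univ := fun t _ => by
    have hG : AnalyticAt ℂ (fun z : ℂ => ∑ s, c s * cexp (x s * z)) t := by fun_prop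
    exact hG.restrictScalars.comp (ofRealCLM.analyticAt _)
  have hg0 : ¬ EqOn g 0 univ := fun h => hc <| funext <|
    Fintype.linearIndependent_iff.mp (linearIndependent_cexp_mul hx) c
      (funext fun t => by simpa using h (mem_univ t))
  have := (hg.eqOn_zero_or_eventually_ne_zero_of_preconnected isPreconnected_univ).resolve_left hg0
  have := ae_restrict_le_codiscreteWithin (μ := volume) MeasurableSet.univ this
  rwa [Measure.restrict_univ] at this

lemma ae_notMem_of_forall_ae_line_notMem {V : Type*} [AddCommGroup V] [Module ℝ V]
    [MeasurableSpace V] [MeasurableAdd₂ V] [MeasurableSMul₂ ℝ V] (μ : Measure V) [SFinite μ]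
    [μ.IsAddRightInvariant] {Z : Set V} (hZ : MeasurableSet Z) (u : V)
    (h : ∀ b, ∀ᵐ t : ℝ, b + t • u ∉ Z) : ∀ᵐ a ∂μ, a ∉ Z := by
  -- The slices of `S` are the line sections `{t | b + t • u ∈ Z}` and the translates of `Z`.
  set S := (fun p : ℝ × V => p.2 + p.1 • u) ⁻¹' Z
  have hS : MeasurableSet S := hZ.preimage (by fun_prop)
  have hS_lines : volume.prod μ S = 0 := by
    rw [Measure.prod_apply_symm hS]
    exact (lintegral_congr fun b => measure_eq_zero_iff_ae_notMem.2 (h b)).trans lintegral_zero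
  have hS_translates : volume.prod μ S = μ Z * ∞ := by
    rw [Measure.prod_apply hS, ← Real.volume_univ, ← lintegral_const]
    exact lintegral_congr fun t => measure_preimage_add_right μ (t • u) Z
  rw [← measure_eq_zero_iff_ae_notMem]
  simpa [hS_lines] using hS_translates.symm

theorem ae_sum_mul_cexp_dual_ne_zero {V ι : Type*} [NormedAddCommGroup V] [NormedSpace ℝ V]
    [FiniteDimensional ℝ V] [MeasurableSpace V] [BorelSpace V] (μ : Measure V)
    [μ.IsAddHaarMeasure] [Fintype ι] {c : ι → ℂ} (hc : c ≠ 0) {ξ : ι → Module.Dual ℝ V}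
    (hξ : Injective ξ) : ∀ᵐ a ∂μ, ∑ s, c s * cexp (2 * π * I * ξ s a) ≠ 0 := by
  obtain ⟨u, hu⟩ : ∃ u : V, ∀ p : {p : ι × ι // p.1 ≠ p.2}, (ξ p.1.1 - ξ p.1.2) u ≠ 0 :=
    Module.Dual.exists_forall_ne_zero_of_forall_exists _ fun p => by
      by_contra! h
      exact p.2 (hξ (sub_eq_zero.1 (LinearMap.ext h)))
  set f : V → ℂ := fun a => ∑ s, c s * cexp (2 * π * I * ξ s a)
  have hf : Continuous f := by
    have := fun s => (ξ s).continuous_of_finiteDimensional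
    fun_prop
  have hline (b : V) (t : ℝ) : f (b + t • u) =
      ∑ s, c s * cexp (2 * π * I * ξ s b) * cexp (2 * π * I * ξ s u * t) := by
    simp only [f, map_add, map_smul, smul_eq_mul, ofReal_add, ofReal_mul, mul_add, Complex.exp_add]
    ring_nf
  refine ae_notMem_of_forall_ae_line_notMem μ (isClosed_singleton.preimage hf).measurableSet u
    fun b => ?_
  show ∀ᵐ t : ℝ, f (b + t • u) ≠ 0
  simp only [hline]
  apply ae_sum_mul_cexp_ne_zero
  · obtain ⟨s, hs⟩ := Function.ne_iff.1 hc
    exact Function.ne_iff.2 ⟨s, mul_ne_zero hs (Complex.exp_ne_zero _)⟩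
  · intro s s' h
    by_contra hne
    exact hu ⟨(s, s'), hne⟩ (by simpa [sub_eq_zero, Real.pi_ne_zero, I_ne_zero] using h)

section TuplePairing

variable {κ ι : Type*} [Fintype κ] [Fintype ι]

def tuplePairing (w : κ → ι → ℝ) : Module.Dual ℝ (κ → ι → ℝ) where
  toFun a := ∑ l, ∑ i, a l i * w l i
  map_add' a b := by simp only [Pi.add_apply, add_mul, Finset.sum_add_distrib]
  map_smul' r a := by
    simp only [Pi.smul_apply, smul_eq_mul, mul_assoc, Finset.mul_sum, RingHom.id_apply]

lemma tuplePairing_apply (w a : κ → ι → ℝ) :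
    tuplePairing w a = ∑ l, ∑ i, a l i * w l i := rfl

lemma tuplePairing_injective : Injective (tuplePairing (κ := κ) (ι := ι)) := fun w w' h => by
  classical
  ext l i
  simpa [tuplePairing_apply, Pi.single_apply, ite_apply, ite_mul] using
    LinearMap.congr_fun h (Pi.single l (Pi.single i 1))

lemma det_of_cexp_eq_sum [DecidableEq κ] (a lam : κ → ι → ℝ) :
    (Matrix.of fun j l : κ => cexp (2 * π * I * ((∑ i, a l i * lam j i : ℝ) : ℂ))).det =
      ∑ σ : Equiv.Perm κ, (σ.sign : ℂ) * cexp (2 * π * I * tuplePairing (lam ∘ σ) a) := by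
  rw [Matrix.det_apply]
  refine Finset.sum_congr rfl fun σ _ => ?_
  simp only [Units.smul_def, zsmul_eq_mul, Matrix.of_apply, tuplePairing_apply, comp_apply,
    ← Complex.exp_sum, ← Finset.mul_sum, ofReal_sum]

lemma ae_det_of_cexp_ne_zero [DecidableEq κ] {lam : κ → ι → ℝ} (hlam : Injective lam) :
    ∀ᵐ a : κ → ι → ℝ,
      (Matrix.of fun j l : κ => cexp (2 * π * I * ((∑ i, a l i * lam j i : ℝ) : ℂ))).det ≠ 0 := by
  have hξ : Injective fun σ : Equiv.Perm κ => tuplePairing (lam ∘ σ) :=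
    tuplePairing_injective.comp (hlam.comp_left.comp DFunLike.coe_injective)
  have hc : (fun σ : Equiv.Perm κ => (σ.sign : ℂ)) ≠ 0 :=
    Function.ne_iff.2 ⟨1, by simp⟩
  simpa only [det_of_cexp_eq_sum] using ae_sum_mul_cexp_dual_ne_zero volume hc hξ

end TuplePairing

theorem ae_tuple_matrix_invertible_general
    {d : ℕ} (Λ : AddSubgroup (Fin d → ℝ)) [DiscreteTopology Λ]
    (D : Set (Fin d → ℝ))
    (Ω : Set (Fin d → ℝ))
    (k : ℕ) :
    ∀ᵐ a ∂(volume : Measure (Fin k → Fin d → ℝ)),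
      ∀ᵐ ω ∂(volume.restrict D),
        ∀ lam : Fin k → (Fin d → ℝ), Function.Injective lam →
          (∀ j, lam j ∈ Λ ∧ ω + lam j ∈ Ω) →
          (Matrix.of fun j l : Fin k =>
            Complex.exp (2 * Real.pi * Complex.I * ((∑ i, a l i * lam j i : ℝ) : ℂ))).det ≠ 0 := by
  have : Countable Λ := TopologicalSpace.separableSpace_iff_countable.mp inferInstance
  have hΛ : ∀ᵐ a : Fin k → Fin d → ℝ, ∀ g : Fin k → Λ, Injective (fun j => (g j : Fin d → ℝ)) →
      (Matrix.of fun j l : Fin k =>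
        cexp (2 * π * I * ((∑ i, a l i * (g j : Fin d → ℝ) i : ℝ) : ℂ))).det ≠ 0 :=
    ae_all_iff.2 fun g => eventually_imp_distrib_left.2 ae_det_of_cexp_ne_zero
  filter_upwards [hΛ] with a ha
  exact ae_of_all _ fun ω lam hlam hmem => ha (fun j => ⟨lam j, (hmem j).1⟩) hlam

/-- Let `Λ` be a full-rank lattice in `ℝ^d` (a discrete subgroup
with a bounded measurable fundamental domain `D`) and `Ω` a bounded measurable set
that `k`-tiles `ℝ^d` by `Λ`.  Then for Lebesgue-a.e. `k`-tuple `(a₁,…,a_k)` the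
following holds: for a.e. `ω ∈ D`, for any enumeration `λ₁(ω),…,λ_k(ω)` of the `k`
elements of `Λ` with `ω + λ_j(ω) ∈ Ω`, the matrix `(e^{2πi⟨a_l, λ_j(ω)⟩})_{j,l}`
is invertible. -/
theorem ae_tuple_matrix_invertible
    {d : ℕ} (Λ : AddSubgroup (Fin d → ℝ)) [DiscreteTopology Λ]
    (D : Set (Fin d → ℝ)) (hDm : MeasurableSet D) (hDb : Bornology.IsBounded D)
    (hfund : ∀ x : Fin d → ℝ, ∃! p : (Fin d → ℝ) × (Fin d → ℝ),
      p.1 ∈ D ∧ p.2 ∈ Λ ∧ x = p.1 + p.2)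
    (Ω : Set (Fin d → ℝ)) (hΩm : MeasurableSet Ω) (hΩb : Bornology.IsBounded Ω)
    (k : ℕ)
    (htile : ∀ᵐ x ∂(volume : Measure (Fin d → ℝ)),
      {l : Fin d → ℝ | l ∈ Λ ∧ x - l ∈ Ω}.ncard = k) :
    ∀ᵐ a ∂(volume : Measure (Fin k → Fin d → ℝ)),
      ∀ᵐ ω ∂(volume.restrict D),
        ∀ lam : Fin k → (Fin d → ℝ), Function.Injective lam →
          (∀ j, lam j ∈ Λ ∧ ω + lam j ∈ Ω) →
          (Matrix.of fun j l : Fin k =>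
            Complex.exp (2 * Real.pi * Complex.I * ((∑ i, a l i * lam j i : ℝ) : ℂ))).det ≠ 0 :=
  ae_tuple_matrix_invertible_general Λ D Ω k
end

section
/- Let G be an LCA group, H a uniform lattice in G with dual lattice Λ ⊆ Ĝ, and D a measurable fundamental domain of Ĝ/Λ. Then the map T : L²(G) → L²(D, ℓ²(Λ)) defined by (T f)(ω) = (f̂(ω + λ))_{λ∈Λ} is a well-defined isometric isomorphism; moreover, for each h ∈ H, T(τ_h f)(ω) = e_h(ω) · (T f)(ω) for almost every ω ∈ D, where e_h(ω) = ω(h) and τ_h f(x) = f(x − h). -/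
/-!
Since `D` meets every coset `x + Λ` exactly once, it is a fundamental domain for the translation
action of the countable group `Λ`, and invariance of Haar measure gives
`∫ f = ∫_D ∑_λ f (ω + λ)` for integrable as well as for nonnegative `f`; applied to `‖F‖²` this is
the isometry. Conversely a family `Φ ω λ` over `D` glues to the function `F (ω + λ) = Φ ω λ`, which
is measurable because the coset index `x ↦ λ` is, and square integrable by the same identity.
The intertwining property is `e (ω + λ) = e ω * e λ = e ω`.
-/

open MeasureTheory ComplexConjugate

open scoped ENNReal

namespace MeasureTheory

variable {G α E : Type*} [AddGroup G] [AddAction G α] [MeasurableSpace α]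
  [MeasurableConstVAdd G α]

theorem exists_measurable_forall_vadd_eq [Countable G] [MeasurableSpace E] {s : Set α}
    (hs : MeasurableSet s) (h : ∀ x, ∃! g : G, g +ᵥ x ∈ s) {Φ : α → G → E}
    (hΦ : ∀ g, Measurable (Φ · g)) :
    ∃ F : α → E, Measurable F ∧ ∀ x ∈ s, ∀ g, F (g +ᵥ x) = Φ x g := by
  choose ι hι using fun x => (h x).exists
  -- `G` need not carry a σ-algebra; the discrete one makes the index map `ι` measurable.
  let : MeasurableSpace G := ⊤
  have hι_meas : Measurable ι := measurable_to_countable' fun g => by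
    have : ι ⁻¹' {g} = (g +ᵥ ·) ⁻¹' s :=
      Set.ext fun x => ⟨by rintro rfl; exact hι x, fun hx => ((h x).unique hx (hι x)).symm⟩
    rw [this]
    exact measurable_const_vadd g hs
  have hglue : Measurable fun p : α × G => Φ (p.2 +ᵥ p.1) (-p.2) :=
    measurable_from_prod_countable_left fun g => (hΦ (-g)).comp (measurable_const_vadd g)
  refine ⟨fun x => Φ (ι x +ᵥ x) (-ι x), hglue.comp (measurable_id.prodMk hι_meas), fun x hx g => ?_⟩
  have : ι (g +ᵥ x) = -g := (h _).unique (hι _) (by rwa [neg_vadd_vadd])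
  simp only [this, neg_vadd_vadd, neg_neg]

variable {μ : Measure α} [VAddInvariantMeasure G α μ]

theorem quasiMeasurePreserving_vadd_restrict (g : G) (s : Set α) :
    Measure.QuasiMeasurePreserving (g +ᵥ ·) (μ.restrict s) μ :=
  (measurePreserving_vadd g μ).quasiMeasurePreserving.mono_left
    (Measure.absolutelyContinuous_of_le Measure.restrict_le_self)

namespace IsAddFundamentalDomain

variable [Countable G] {s : Set α}

theorem lintegral_eq_setLIntegral_tsum (h : IsAddFundamentalDomain G s μ) {f : α → ℝ≥0∞}
    (hf : AEMeasurable f μ) : ∫⁻ x, f x ∂μ = ∫⁻ x in s, ∑' g : G, f (g +ᵥ x) ∂μ := by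
  rw [h.lintegral_eq_tsum'', lintegral_tsum (f := fun g x => f (g +ᵥ x))
    fun g => hf.comp_quasiMeasurePreserving (quasiMeasurePreserving_vadd_restrict g s)]

theorem integral_eq_setIntegral_tsum [NormedAddCommGroup E] [NormedSpace ℝ E]
    (h : IsAddFundamentalDomain G s μ) {f : α → E} (hf : Integrable f μ) :
    ∫ x, f x ∂μ = ∫ x in s, ∑' g : G, f (g +ᵥ x) ∂μ := by
  rw [h.integral_eq_tsum'' f hf, integral_tsum]
  · exact fun g => hf.aestronglyMeasurable.comp_quasiMeasurePreserving
      (quasiMeasurePreserving_vadd_restrict g s)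
  · rw [← h.lintegral_eq_tsum'' fun x => ‖f x‖ₑ]
    exact hf.hasFiniteIntegral.ne

end IsAddFundamentalDomain

theorem memLp_two_of_lintegral_enorm_sq_lt_top [NormedAddCommGroup E] {f : α → E}
    (hf : AEStronglyMeasurable f μ) (h : ∫⁻ x, ‖f x‖ₑ ^ 2 ∂μ < ⊤) : MemLp f 2 μ :=
  (memLp_two_iff_integrable_sq_norm hf).2
    ⟨hf.norm.pow 2, by simpa [HasFiniteIntegral, enorm_pow] using h⟩

end MeasureTheory

theorem AddSubgroup.vadd_eq_add_coe {Γ : Type*} [AddCommGroup Γ] {Λ : AddSubgroup Γ} (l : Λ)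
    (x : Γ) : l +ᵥ x = x + l :=
  add_comm _ _

theorem AddSubgroup.existsUnique_vadd_mem_of_existsUnique_add {Γ : Type*} [AddCommGroup Γ]
    {Λ : AddSubgroup Γ} {D : Set Γ} (h : ∀ x, ∃! p : Γ × Γ, p.1 ∈ D ∧ p.2 ∈ Λ ∧ x = p.1 + p.2)
    (x : Γ) : ∃! l : Λ, l +ᵥ x ∈ D := by
  obtain ⟨⟨d, l⟩, ⟨hd, hl, rfl⟩, huniq⟩ := h x
  refine ⟨⟨-l, neg_mem hl⟩, by simpa [vadd_eq_add_coe] using hd, fun g hg => Subtype.ext ?_⟩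
  have := huniq (g +ᵥ (d + l), -g) ⟨hg, neg_mem g.2, by simp [vadd_eq_add_coe]⟩
  simp only [Prod.ext_iff] at this
  simp [← this.2]

theorem fiberization_isometric_isomorphism_general
    {Γ : Type*} [AddCommGroup Γ] [TopologicalSpace Γ] [IsTopologicalAddGroup Γ]
    [MeasurableSpace Γ] [BorelSpace Γ]
    (μ : Measure Γ) [μ.IsAddHaarMeasure]
    (Λ : AddSubgroup Γ) [Countable Λ]
    (D : Set Γ) (hDm : MeasurableSet D)
    (hfund : ∀ x : Γ, ∃! p : Γ × Γ, p.1 ∈ D ∧ p.2 ∈ Λ ∧ x = p.1 + p.2) :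
    -- (1) isometry
    (∀ F : Γ → ℂ, MemLp F 2 μ →
      ∫ x, ‖F x‖ ^ 2 ∂μ = ∫ ω in D, (∑' l : Λ, ‖F (ω + (l : Γ))‖ ^ 2) ∂μ) ∧
    -- (2) surjectivity onto `L²(D, ℓ²(Λ))`
    (∀ Φ : Γ → Λ → ℂ, (∀ l, Measurable fun ω => Φ ω l) →
      (∫⁻ ω in D, ∑' l : Λ, ((‖Φ ω l‖₊ : ENNReal) ^ 2) ∂μ) < ⊤ →
      ∃ F : Γ → ℂ, MemLp F 2 μ ∧
        ∀ᵐ ω ∂(μ.restrict D), ∀ l : Λ, F (ω + (l : Γ)) = Φ ω l) ∧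
    -- (3) `T` intertwines multiplication by `Λ`-periodic characters with
    -- scalar multiplication by `e(ω)` on the fiber over `ω`
    (∀ e : Γ → ℂ,
      (Continuous e ∧ (∀ x, ‖e x‖ = 1) ∧ (∀ x y, e (x + y) = e x * e y) ∧
        ∀ l ∈ Λ, e l = 1) →
      ∀ F : Γ → ℂ, ∀ᵐ ω ∂(μ.restrict D), ∀ l : Λ,
        e (ω + (l : Γ)) * F (ω + (l : Γ)) = e ω * F (ω + (l : Γ))) := by
  have hvadd := AddSubgroup.existsUnique_vadd_mem_of_existsUnique_add hfund
  have hD : IsAddFundamentalDomain Λ D μ := .mk' hDm.nullMeasurableSet hvadd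
  refine ⟨fun F hF => ?_, fun Φ hΦ hΦ_fin => ?_, ?_⟩
  · simpa only [AddSubgroup.vadd_eq_add_coe] using
      hD.integral_eq_setIntegral_tsum ((memLp_two_iff_integrable_sq_norm hF.1).1 hF)
  · obtain ⟨F, hF_meas, hFΦ⟩ := exists_measurable_forall_vadd_eq hDm hvadd hΦ
    refine ⟨F, memLp_two_of_lintegral_enorm_sq_lt_top hF_meas.aestronglyMeasurable ?_,
      ae_restrict_of_forall_mem hDm (by simpa only [AddSubgroup.vadd_eq_add_coe] using hFΦ)⟩
    rw [hD.lintegral_eq_setLIntegral_tsum (hF_meas.enorm.pow_const 2).aemeasurable,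
      setLIntegral_congr_fun hDm (g := fun ω => ∑' l : Λ, ‖Φ ω l‖ₑ ^ 2)
        fun ω hω => by simp only [hFΦ ω hω]]
    simpa only [enorm_eq_nnnorm] using hΦ_fin
  · rintro e ⟨-, -, hmul, htriv⟩ F
    exact .of_forall fun ω l => by rw [hmul, htriv l l.2, mul_one]

/-- **fiberization map, stated on the Fourier side.**
Let `Γ = Ĝ` be an LCA group, `Λ ⊆ Γ` the countable uniform dual lattice of a uniform
lattice `H ⊆ G`, and `D` a measurable fundamental domain of `Γ/Λ`.  The map
`T : L²(Γ) → L²(D, ℓ²(Λ))`, `(T F)(ω) = (F(ω+λ))_{λ∈Λ}` (which is the map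
`T : L²(G) → L²(D, ℓ²(Λ))`, `f ↦ (f̂(ω+λ))_λ`, composed with the inverse Fourier
transform) is a well-defined isometric isomorphism:
(1) it is isometric; (2) it is surjective onto `L²(D, ℓ²(Λ))`; and moreover
(3) multiplication by a character `e` of `Γ` trivial on `Λ` (i.e. an `e_h`, `h ∈ H`)
acts on fibers as multiplication by the scalar `e(ω)`. -/
theorem fiberization_isometric_isomorphism
    {Γ : Type*} [AddCommGroup Γ] [TopologicalSpace Γ] [IsTopologicalAddGroup Γ]
    [LocallyCompactSpace Γ] [T2Space Γ] [MeasurableSpace Γ] [BorelSpace Γ]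
    (μ : Measure Γ) [μ.IsAddHaarMeasure]
    (Λ : AddSubgroup Γ) [DiscreteTopology Λ] [Countable Λ] [CompactSpace (Γ ⧸ Λ)]
    (D : Set Γ) (hDm : MeasurableSet D)
    (hfund : ∀ x : Γ, ∃! p : Γ × Γ, p.1 ∈ D ∧ p.2 ∈ Λ ∧ x = p.1 + p.2) :
    -- (1) isometry
    (∀ F : Γ → ℂ, MemLp F 2 μ →
      ∫ x, ‖F x‖ ^ 2 ∂μ = ∫ ω in D, (∑' l : Λ, ‖F (ω + (l : Γ))‖ ^ 2) ∂μ) ∧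
    -- (2) surjectivity onto `L²(D, ℓ²(Λ))`
    (∀ Φ : Γ → Λ → ℂ, (∀ l, Measurable fun ω => Φ ω l) →
      (∫⁻ ω in D, ∑' l : Λ, ((‖Φ ω l‖₊ : ENNReal) ^ 2) ∂μ) < ⊤ →
      ∃ F : Γ → ℂ, MemLp F 2 μ ∧
        ∀ᵐ ω ∂(μ.restrict D), ∀ l : Λ, F (ω + (l : Γ)) = Φ ω l) ∧
    -- (3) `T` intertwines multiplication by `Λ`-periodic characters with
    -- scalar multiplication by `e(ω)` on the fiber over `ω`
    (∀ e : Γ → ℂ,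
      (Continuous e ∧ (∀ x, ‖e x‖ = 1) ∧ (∀ x y, e (x + y) = e x * e y) ∧
        ∀ l ∈ Λ, e l = 1) →
      ∀ F : Γ → ℂ, ∀ᵐ ω ∂(μ.restrict D), ∀ l : Λ,
        e (ω + (l : Γ)) * F (ω + (l : Γ)) = e ω * F (ω + (l : Γ))) :=
  fiberization_isometric_isomorphism_general μ Λ D hDm hfund
end
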